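/- Fix n ≥ 1 and 0 ≤ k ≤ n−1. Let π and σ be two independent uniformly random permutations of [n], write E(π) = {(π_i, π_{i+1}) : 1 ≤ i ≤ n−1} and similarly E(σ), and let Z = |E(π) ∩ E(σ)|. Then 𝔼[C(Z, k)] = ((n−k)/n) · (1/k!), where C(Z,k) is the binomial coefficient. Equivalently, for any fixed permutation π and any k-element subset S ⊆ E(π), the probability that S ⊆ E(σ) for uniform σ is (n−k)!/n!. -/

import Mathlib

/-- The set `E(π) = {(π_i, π_{i+1}) : 1 ≤ i ≤ n−1}` of `n−1` consecutive directed edges of a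
permutation `π` of `Fin n` in one-line notation. -/
def edgeFinset (n : ℕ) (π : Equiv.Perm (Fin n)) : Finset (Fin n × Fin n) :=
  Finset.image (fun i : Fin (n - 1) =>
    (π ⟨i.1, by have := i.isLt; omega⟩, π ⟨i.1 + 1, by have := i.isLt; omega⟩)) Finset.univ

/-!
Writing `C(Z, k)` as the number of `k`-subsets `S ⊆ E(π)` with `S ⊆ E(σ)` and exchanging
sums, `𝔼[C(Z, k)] = C(n - 1, k) · P(S ⊆ E(σ))` for any fixed such `S`. With `μ = σ⁻¹ π`,
the event `S ⊆ E(σ)` says that `μ` maps the positions `i, i + 1` to consecutive values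
for every `i` in a `k`-set `T` of positions. There are `(n - k)!` such `μ`: if `t` is the
largest element of `T`, deleting position `t + 1` and its value (forced to be `μ t + 1`)
from the one-line notation of `μ` is a bijection onto the permutations of `Fin (n - 1)`
with the same property for `T \ {t}`.
-/

open Equiv Finset
open scoped Nat

namespace Fin

variable {m : ℕ}

theorem val_succAbove (q : Fin (m + 1)) (a : Fin m) :
    (q.succAbove a : ℕ) = if (a : ℕ) < q then (a : ℕ) else (a : ℕ) + 1 := by
  unfold succAbove; split_ifs <;> simp_all [lt_def]

theorem val_add_one_eq_of_succAbove {q : Fin (m + 1)} {a b : Fin m}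
    (h : (q.succAbove a : ℕ) + 1 = q.succAbove b) : (a : ℕ) + 1 = b := by
  simp only [val_succAbove] at h; split_ifs at h <;> omega

theorem val_succAbove_add_one_eq {q : Fin (m + 1)} {a b : Fin m} (h : (a : ℕ) + 1 = b)
    (hq : (b : ℕ) ≠ q) : (q.succAbove a : ℕ) + 1 = q.succAbove b := by
  simp only [val_succAbove]; split_ifs <;> omega

theorem succ_eq_of_val_succAbove_add_one_eq {q : Fin (m + 1)} {a : Fin m}
    (h : (q.succAbove a : ℕ) + 1 = q) : a.succ = q := by
  ext; simp only [val_succAbove] at h; split_ifs at h <;> simp <;> omega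

theorem val_succ_succAbove_of_le (τ a : Fin m) (h : (a : ℕ) ≤ τ) :
    (τ.succ.succAbove a : ℕ) = a := by
  rw [succAbove_succ_of_le _ _ (le_def.2 h), val_castSucc]

end Fin

namespace Equiv.Perm

variable {m : ℕ}

/-- In one-line notation: insert the value `q` at position `p`, shifting the entries of `ν`
that are `≥ q` up by one. -/
def insertAt (p q : Fin (m + 1)) (ν : Perm (Fin m)) : Perm (Fin (m + 1)) :=
  (finSuccEquiv' p).trans (ν.optionCongr.trans (finSuccEquiv' q).symm)

@[simp]
theorem insertAt_apply_self (p q : Fin (m + 1)) (ν : Perm (Fin m)) : insertAt p q ν p = q := by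
  simp [insertAt]

@[simp]
theorem insertAt_apply_succAbove (p q : Fin (m + 1)) (ν : Perm (Fin m)) (j : Fin m) :
    insertAt p q ν (p.succAbove j) = q.succAbove (ν j) := by
  simp [insertAt]

/-- In one-line notation: delete position `p` and the value `μ p`, closing both gaps. -/
def removeAt (p : Fin (m + 1)) (μ : Perm (Fin (m + 1))) : Perm (Fin m) :=
  removeNone ((finSuccEquiv' p).symm.trans (μ.trans (finSuccEquiv' (μ p))))

@[simp]
theorem succAbove_removeAt_apply (p : Fin (m + 1)) (μ : Perm (Fin (m + 1))) (j : Fin m) :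
    (μ p).succAbove (removeAt p μ j) = μ (p.succAbove j) := by
  obtain ⟨k, hk⟩ := Fin.exists_succAbove_eq (μ.injective.ne (p.succAbove_ne j))
  have h := removeNone_some ((finSuccEquiv' p).symm.trans (μ.trans (finSuccEquiv' (μ p))))
    (x := j) ⟨k, by simp [← hk]⟩
  simp only [trans_apply, finSuccEquiv'_symm_some, ← hk, finSuccEquiv'_succAbove,
    Option.some_inj] at h
  rw [removeAt, h, hk]

theorem removeAt_insertAt (p q : Fin (m + 1)) (ν : Perm (Fin m)) :
    removeAt p (insertAt p q ν) = ν := by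
  ext j
  have h := succAbove_removeAt_apply p (insertAt p q ν) j
  rw [insertAt_apply_self, insertAt_apply_succAbove] at h
  rw [Fin.succAbove_right_injective h]

theorem insertAt_removeAt (p : Fin (m + 1)) (μ : Perm (Fin (m + 1))) :
    insertAt p (μ p) (removeAt p μ) = μ := by
  ext x
  induction x using Fin.succAboveCases p <;> simp

end Equiv.Perm

open Equiv.Perm

/-- Positions are natural numbers so that the same `T` makes sense in every `Fin n`. -/
def ConsecutiveOn {n : ℕ} (T : Finset ℕ) (μ : Perm (Fin n)) : Prop :=
  ∀ a b : Fin n, (a : ℕ) ∈ T → (a : ℕ) + 1 = b → (μ a : ℕ) + 1 = μ b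

instance {n : ℕ} (T : Finset ℕ) : DecidablePred (ConsecutiveOn (n := n) T) :=
  fun _ => by unfold ConsecutiveOn; infer_instance

theorem ConsecutiveOn.mono {n : ℕ} {T T' : Finset ℕ} {μ : Perm (Fin n)}
    (hμ : ConsecutiveOn T μ) (h : T' ⊆ T) : ConsecutiveOn T' μ :=
  fun a b ha hab => hμ a b (h ha) hab

theorem consecutiveOn_removeAt {m t : ℕ} (ht : t < m) {s : Finset ℕ} (hs : ∀ i ∈ s, i < t)
    {μ : Perm (Fin (m + 1))} (hμ : ConsecutiveOn (insert t s) μ) :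
    ConsecutiveOn s (removeAt (⟨t, ht⟩ : Fin m).succ μ) := by
  intro a b ha hab
  have hat := hs a ha
  have hpa := Fin.val_succ_succAbove_of_le ⟨t, ht⟩ a (by simp; omega)
  have hpb := Fin.val_succ_succAbove_of_le ⟨t, ht⟩ b (by simp; omega)
  apply Fin.val_add_one_eq_of_succAbove (q := μ (⟨t, ht⟩ : Fin m).succ)
  simp only [succAbove_removeAt_apply]
  exact hμ _ _ (by rw [hpa]; exact mem_insert_of_mem ha) (by rw [hpa, hpb, hab])

theorem succ_removeAt_apply {m t : ℕ} (ht : t < m) {μ : Perm (Fin (m + 1))}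
    (hμ : ConsecutiveOn {t} μ) :
    (removeAt (⟨t, ht⟩ : Fin m).succ μ ⟨t, ht⟩).succ = μ (⟨t, ht⟩ : Fin m).succ := by
  apply Fin.succ_eq_of_val_succAbove_add_one_eq
  rw [succAbove_removeAt_apply, Fin.succAbove_succ_self]
  exact hμ _ _ (by simp) (by simp)

theorem consecutiveOn_insertAt {m t : ℕ} (ht : t < m) {s : Finset ℕ} (hs : ∀ i ∈ s, i < t)
    {ν : Perm (Fin m)} (hν : ConsecutiveOn s ν) :
    ConsecutiveOn (insert t s) (insertAt (⟨t, ht⟩ : Fin m).succ (ν ⟨t, ht⟩).succ ν) := by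
  set τ : Fin m := ⟨t, ht⟩
  intro a b ha hab
  rcases mem_insert.1 ha with hat | has
  · obtain rfl : a = τ.castSucc := by ext; simp [hat, τ]
    obtain rfl : b = τ.succ := by ext; simp [← hab]
    rw [← Fin.succAbove_succ_self, insertAt_apply_succAbove, insertAt_apply_self,
      Fin.succAbove_succ_self]
    simp
  · have hat := hs a has
    set a' : Fin m := ⟨a, by omega⟩
    set b' : Fin m := ⟨b, by omega⟩
    have ha' : a = τ.succ.succAbove a' :=
      Fin.ext (Fin.val_succ_succAbove_of_le τ a' (by simp [a', τ]; omega)).symm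
    have hb' : b = τ.succ.succAbove b' :=
      Fin.ext (Fin.val_succ_succAbove_of_le τ b' (by simp [b', τ]; omega)).symm
    have hν' : (ν a' : ℕ) + 1 = ν b' := hν a' b' has hab
    -- the inserted value `ν τ + 1` can only separate `ν τ` from its successor
    have hne : ν a' ≠ ν τ := ν.injective.ne (by simp [Fin.ext_iff, a', τ]; omega)
    rw [ha', hb', insertAt_apply_succAbove, insertAt_apply_succAbove]
    refine Fin.val_succAbove_add_one_eq hν' ?_
    simp only [Fin.val_succ, ← hν', ne_eq, Nat.add_right_cancel_iff]
    exact Fin.val_ne_of_ne hne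

theorem card_consecutiveOn_insert {m t : ℕ} (ht : t < m) {s : Finset ℕ}
    (hs : ∀ i ∈ s, i < t) :
    #{μ : Perm (Fin (m + 1)) | ConsecutiveOn (insert t s) μ} =
      #{ν : Perm (Fin m) | ConsecutiveOn s ν} := by
  set τ : Fin m := ⟨t, ht⟩
  refine card_bij' (fun μ _ => removeAt τ.succ μ) (fun ν _ => insertAt τ.succ (ν τ).succ ν)
    (fun μ hμ => ?_) (fun ν hν => ?_) (fun μ hμ => ?_) (fun ν _ => removeAt_insertAt _ _ _)
  · simp only [mem_filter, mem_univ, true_and] at hμ ⊢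
    exact consecutiveOn_removeAt ht hs hμ
  · simp only [mem_filter, mem_univ, true_and] at hν ⊢
    exact consecutiveOn_insertAt ht hs hν
  · simp only [mem_filter, mem_univ, true_and] at hμ
    rw [succ_removeAt_apply ht (hμ.mono (singleton_subset_iff.2 (mem_insert_self t s))),
      insertAt_removeAt]

theorem card_consecutiveOn (n : ℕ) (T : Finset ℕ) (hT : ∀ i ∈ T, i + 1 < n) :
    #{μ : Perm (Fin n) | ConsecutiveOn T μ} = (n - #T)! := by
  induction T using Finset.induction_on_max generalizing n with
  | empty => simp [ConsecutiveOn, Fintype.card_perm]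
  | insert t s hs ih =>
    have ht := hT t (mem_insert_self t s)
    obtain ⟨m, rfl⟩ : ∃ m, n = m + 1 := ⟨n - 1, by omega⟩
    rw [card_consecutiveOn_insert (by omega) hs,
      ih m (fun i hi => by have := hs i hi; omega),
      card_insert_of_notMem (fun h => (hs t h).false), Nat.add_sub_add_right]

theorem mem_edgeFinset_iff {n : ℕ} (σ : Perm (Fin n)) (x y : Fin n) :
    (x, y) ∈ edgeFinset n σ ↔ (σ⁻¹ x : ℕ) + 1 = σ⁻¹ y := by
  simp only [edgeFinset, mem_image, mem_univ, true_and, Prod.mk.injEq]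
  constructor
  · rintro ⟨i, rfl, rfl⟩
    simp
  · intro h
    have hx : (σ⁻¹ x : ℕ) < n - 1 := by have := (σ⁻¹ y).isLt; omega
    refine ⟨⟨σ⁻¹ x, hx⟩, ?_, ?_⟩
    · simp
    · exact (congrArg σ (Fin.ext h : _ = σ⁻¹ y)).trans (σ.apply_symm_apply y)

theorem card_edgeFinset {n : ℕ} (π : Perm (Fin n)) : #(edgeFinset n π) = n - 1 := by
  rw [edgeFinset, card_image_of_injective, card_univ, Fintype.card_fin]
  intro i j hij
  simpa [Fin.ext_iff] using congrArg Prod.fst hij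

section

variable {n : ℕ} {π : Perm (Fin n)} {S : Finset (Fin n × Fin n)}

theorem card_image_inv_fst_of_subset_edgeFinset (hS : S ⊆ edgeFinset n π) :
    #(S.image fun e => (π⁻¹ e.1 : ℕ)) = #S := by
  refine card_image_of_injOn fun e he f hf hef => ?_
  have he' := (mem_edgeFinset_iff π _ _).1 (hS he)
  have hf' := (mem_edgeFinset_iff π _ _).1 (hS hf)
  have h1 : π⁻¹ e.1 = π⁻¹ f.1 := Fin.ext hef
  have h2 : π⁻¹ e.2 = π⁻¹ f.2 := Fin.ext (by rw [← he', ← hf', h1])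
  exact Prod.ext ((π⁻¹).injective h1) ((π⁻¹).injective h2)

theorem subset_edgeFinset_iff_consecutiveOn (hS : S ⊆ edgeFinset n π) (σ : Perm (Fin n)) :
    S ⊆ edgeFinset n σ ↔ ConsecutiveOn (S.image fun e => (π⁻¹ e.1 : ℕ)) (σ⁻¹ * π) := by
  constructor
  · intro hσ a b ha hab
    obtain ⟨⟨x, y⟩, hxy, hax⟩ := mem_image.1 ha
    have hπ := (mem_edgeFinset_iff π x y).1 (hS hxy)
    obtain rfl : a = π⁻¹ x := Fin.ext hax.symm
    obtain rfl : b = π⁻¹ y := Fin.ext (hab.symm.trans hπ)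
    simpa using (mem_edgeFinset_iff σ x y).1 (hσ hxy)
  · rintro hσ ⟨x, y⟩ hxy
    simpa [mem_edgeFinset_iff] using
      hσ (π⁻¹ x) (π⁻¹ y) (mem_image_of_mem _ hxy) ((mem_edgeFinset_iff π x y).1 (hS hxy))

theorem card_filter_subset_edgeFinset (hS : S ⊆ edgeFinset n π) :
    #{σ : Perm (Fin n) | S ⊆ edgeFinset n σ} = (n - #S)! := by
  have hT : ∀ i ∈ S.image fun e => (π⁻¹ e.1 : ℕ), i + 1 < n := by
    simp only [mem_image, forall_exists_index, and_imp]
    rintro _ ⟨x, y⟩ hxy rfl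
    show (π⁻¹ x : ℕ) + 1 < n
    have := (mem_edgeFinset_iff π x y).1 (hS hxy)
    have := (π⁻¹ y).isLt
    omega
  rw [← card_image_inv_fst_of_subset_edgeFinset hS, ← card_consecutiveOn n _ hT]
  exact card_equiv ((Equiv.inv _).trans (Equiv.mulRight π))
    (by simp [subset_edgeFinset_iff_consecutiveOn hS])

end

theorem choose_card_inter {α : Type*} [DecidableEq α] (s t : Finset α) (k : ℕ) :
    (#(s ∩ t)).choose k = #{S ∈ powersetCard k s | S ⊆ t} := by
  rw [← card_powersetCard]
  congr 1
  ext S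
  simp only [mem_powersetCard, mem_filter, subset_inter_iff]
  tauto

theorem sum_choose_card_inter_edgeFinset {n : ℕ} (π : Perm (Fin n)) (k : ℕ) :
    ∑ σ : Perm (Fin n), (#(edgeFinset n π ∩ edgeFinset n σ)).choose k =
      (n - 1).choose k * (n - k)! := by
  simp_rw [choose_card_inter, card_filter]
  rw [sum_comm, ← card_edgeFinset π, ← card_powersetCard, card_eq_sum_ones, sum_mul]
  refine sum_congr rfl fun S hS => ?_
  rw [← card_filter, one_mul, card_filter_subset_edgeFinset (mem_powersetCard.1 hS).1,
    (mem_powersetCard.1 hS).2]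

theorem choose_pred_mul_factorial {n k : ℕ} (hk : k < n) :
    (n - 1).choose k * (n - k)! * k ! * n = (n - k) * n ! := by
  obtain ⟨m, rfl⟩ : ∃ m, n = m + 1 := ⟨n - 1, by omega⟩
  have h := Nat.choose_mul_factorial_mul_factorial (n := m) (k := k) (by omega)
  rw [show m + 1 - k = (m - k) + 1 by omega, Nat.factorial_succ (m - k), Nat.factorial_succ m,
    Nat.add_sub_cancel, ← h]
  ring

/-- Fix `n ≥ 1` and `0 ≤ k ≤ n−1`. For `π, σ` independent uniform
permutations of `[n]` and `Z = |E(π) ∩ E(σ)|`, one has `𝔼[C(Z,k)] = ((n−k)/n)·(1/k!)`;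
equivalently, for any fixed `π` and any `k`-element `S ⊆ E(π)`, the probability that
`S ⊆ E(σ)` for uniform `σ` is `(n−k)!/n!`. -/
theorem stmt18 (n : ℕ) (hn : 1 ≤ n) (k : ℕ) (hk : k ≤ n - 1) :
    ((∑ π : Equiv.Perm (Fin n), ∑ σ : Equiv.Perm (Fin n),
        (((edgeFinset n π ∩ edgeFinset n σ).card.choose k : ℝ))) /
          ((n.factorial : ℝ) * (n.factorial : ℝ)) =
      (((n : ℝ) - k) / (n : ℝ)) * (1 / (k.factorial : ℝ))) ∧
    (∀ π : Equiv.Perm (Fin n), ∀ S ⊆ edgeFinset n π, S.card = k →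
      (((Finset.univ.filter (fun σ : Equiv.Perm (Fin n) => S ⊆ edgeFinset n σ)).card : ℝ) /
          (n.factorial : ℝ) =
        ((n - k).factorial : ℝ) / (n.factorial : ℝ))) := by
  refine ⟨?_, fun π S hS hSk => by rw [card_filter_subset_edgeFinset hS, hSk]⟩
  have hsum : ∑ π : Perm (Fin n), ∑ σ : Perm (Fin n),
      ((#(edgeFinset n π ∩ edgeFinset n σ)).choose k : ℝ) =
        n ! * ((n - 1).choose k * (n - k)!) := by
    simp_rw [← Nat.cast_sum, sum_choose_card_inter_edgeFinset, sum_const, card_univ,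
      Fintype.card_perm, Fintype.card_fin, smul_eq_mul]
    push_cast; ring
  have key : ((n - 1).choose k * (n - k)! * k ! * n : ℝ) = (n - k) * n ! := by
    rw [← Nat.cast_sub (by omega)]
    exact_mod_cast choose_pred_mul_factorial (by omega)
  rw [hsum]
  field_simp
  linear_combination key
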